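/- arXiv:2605.08274 — 3 statements merged into one kernel-verified Lean document; each statement's English description precedes it below -/
import Mathlib

section
/- Let (X, ≤) be a nonempty partially ordered set in which every nonempty well-ordered subset admits a least upper bound in X, let f : X → X be progressive, let x₀ ∈ X, and let Ω be the union of all Bourbaki f-towers based at x₀. If ω = lub_X(Ω), then ω ∈ Ω and f(ω) = ω. -/
/-- `Y` is well-ordered by the induced order: the order is total on `Y`
and every nonempty subset of `Y` has a least element. -/
def IsWOSubset {X : Type*} [PartialOrder X] (Y : Set X) : Prop :=
  (∀ a ∈ Y, ∀ b ∈ Y, a ≤ b ∨ b ≤ a) ∧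
  (∀ S : Set X, S ⊆ Y → S.Nonempty → ∃ m, IsLeast S m)

/-- The initial segment of `Y` determined by `y`. -/
def IS {X : Type*} [PartialOrder X] (Y : Set X) (y : X) : Set X := {z ∈ Y | z < y}

/-- The weak initial segment of `Y` determined by `y`. -/
def WIS {X : Type*} [PartialOrder X] (Y : Set X) (y : X) : Set X := {z ∈ Y | z ≤ y}

/-- `y` is a successor element of `Y`: it is the least element of
`{w ∈ Y | z < w}` for some `z ∈ Y`. -/
def IsSuccElem {X : Type*} [PartialOrder X] (Y : Set X) (y : X) : Prop :=
  ∃ z ∈ Y, IsLeast {w ∈ Y | z < w} y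

/-- `y` is a limit element of `Y`: it belongs to `Y`, is not the least element
of `Y`, and is not a successor element of `Y`. -/
def IsLimitElem {X : Type*} [PartialOrder X] (Y : Set X) (y : X) : Prop :=
  y ∈ Y ∧ ¬ IsLeast Y y ∧ ¬ IsSuccElem Y y

/-- `A` is an initial segment of `B`. -/
def IsInitialSegOf {X : Type*} [PartialOrder X] (A B : Set X) : Prop :=
  A ⊆ B ∧ ∀ a ∈ A, ∀ b ∈ B, b < a → b ∈ A

/-- `f` is progressive: `x ≤ f x` for all `x`. -/
def Progressive {X : Type*} [PartialOrder X] (f : X → X) : Prop := ∀ x, x ≤ f x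

/-- `Y` is a Bourbaki `f`-tower based at `x₀`. -/
def BourbakiTower {X : Type*} [PartialOrder X] (f : X → X) (x₀ : X) (Y : Set X) : Prop :=
  IsWOSubset Y ∧ IsLeast Y x₀ ∧
  (∀ y ∈ Y, ¬ IsGreatest Y y → IsLeast {z ∈ Y | y < z} (f y)) ∧
  (∀ y, IsLimitElem Y y → IsLUB (IS Y y) y)
section
variable {X : Type*} [PartialOrder X] {f : X → X} {x₀ : X}

lemma tower_comparison {A B : Set X} (hA : BourbakiTower f x₀ A)
    (hB : BourbakiTower f x₀ B) : IsInitialSegOf A B ∨ IsInitialSegOf B A := by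
  classical
  set C : Set X := {x | x ∈ A ∧ x ∈ B ∧ WIS A x = WIS B x} with hCdef
  have hCA : C ⊆ A := fun x hx => hx.1
  have hCB : C ⊆ B := fun x hx => hx.2.1
  -- C is an initial segment (downward closed) in A and in B
  have hinitA : ∀ x ∈ C, ∀ a ∈ A, a < x → a ∈ C := by
    intro x hx a haA halt
    have haB : a ∈ B := by
      have : a ∈ WIS A x := ⟨haA, halt.le⟩
      rw [hx.2.2] at this; exact this.1
    refine ⟨haA, haB, ?_⟩
    ext z
    constructor
    · rintro ⟨hzA, hz⟩
      have : z ∈ WIS A x := ⟨hzA, hz.trans halt.le⟩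
      rw [hx.2.2] at this
      exact ⟨this.1, hz⟩
    · rintro ⟨hzB, hz⟩
      have : z ∈ WIS B x := ⟨hzB, hz.trans halt.le⟩
      rw [← hx.2.2] at this
      exact ⟨this.1, hz⟩
  have hinitB : ∀ x ∈ C, ∀ b ∈ B, b < x → b ∈ C := by
    intro x hx b hbB hblt
    have hbA : b ∈ A := by
      have : b ∈ WIS B x := ⟨hbB, hblt.le⟩
      rw [← hx.2.2] at this; exact this.1
    exact hinitA x hx b hbA hblt
  have hx₀C : x₀ ∈ C := by
    refine ⟨hA.2.1.1, hB.2.1.1, ?_⟩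
    ext z
    constructor
    · rintro ⟨hzA, hz⟩
      have := le_antisymm hz (hA.2.1.2 hzA)
      exact ⟨this ▸ hB.2.1.1, hz⟩
    · rintro ⟨hzB, hz⟩
      have := le_antisymm hz (hB.2.1.2 hzB)
      exact ⟨this ▸ hA.2.1.1, hz⟩
  by_cases hAC : A ⊆ C
  · left
    constructor
    · exact fun a ha => (hAC ha).2.1
    · intro a haA b hbB hlt
      have : b ∈ WIS B a := ⟨hbB, hlt.le⟩
      rw [← (hAC haA).2.2] at this
      exact this.1
  by_cases hBC : B ⊆ C
  · right
    constructor
    · exact fun b hb => (hBC hb).1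
    · intro b hbB a haA hlt
      have : a ∈ WIS A b := ⟨haA, hlt.le⟩
      rw [(hBC hbB).2.2] at this
      exact this.1
  exfalso
  -- a is the least element of A \ C, b of B \ C
  obtain ⟨a, ha⟩ : ∃ a, IsLeast (A \ C) a := by
    refine hA.1.2 _ (fun x hx => hx.1) ?_
    obtain ⟨x, hx1, hx2⟩ := Set.not_subset.mp hAC
    exact ⟨x, hx1, hx2⟩
  obtain ⟨b, hb⟩ : ∃ b, IsLeast (B \ C) b := by
    refine hB.1.2 _ (fun x hx => hx.1) ?_
    obtain ⟨x, hx1, hx2⟩ := Set.not_subset.mp hBC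
    exact ⟨x, hx1, hx2⟩
  have haA : a ∈ A := ha.1.1
  have hbB : b ∈ B := hb.1.1
  have haC : a ∉ C := ha.1.2
  have hbC : b ∉ C := hb.1.2
  have hCa : C = IS A a := by
    ext c
    constructor
    · intro hc
      refine ⟨hCA hc, ?_⟩
      rcases hA.1.1 a haA c (hCA hc) with h | h
      · rcases eq_or_lt_of_le h with rfl | h'
        · exact absurd hc haC
        · exact absurd (hinitA c hc a haA h') haC
      · rcases eq_or_lt_of_le h with rfl | h'
        · exact absurd hc haC
        · exact h'
    · rintro ⟨hcA, hclt⟩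
      by_contra hcC
      exact absurd (ha.2 ⟨hcA, hcC⟩) hclt.not_ge
  have hCb : C = IS B b := by
    ext c
    constructor
    · intro hc
      refine ⟨hCB hc, ?_⟩
      rcases hB.1.1 b hbB c (hCB hc) with h | h
      · rcases eq_or_lt_of_le h with rfl | h'
        · exact absurd hc hbC
        · exact absurd (hinitB c hc b hbB h') hbC
      · rcases eq_or_lt_of_le h with rfl | h'
        · exact absurd hc hbC
        · exact h'
    · rintro ⟨hcB, hclt⟩
      by_contra hcC
      exact absurd (hb.2 ⟨hcB, hcC⟩) hclt.not_ge
  -- a = b in both cases, and then a ∈ C: contradiction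
  have key : a = b := by
    by_cases hg : ∃ g, IsGreatest C g
    · obtain ⟨g, hgC, hgub⟩ := hg
      have hga : g < a := (hCa ▸ hgC).2
      have hgb : g < b := (hCb ▸ hgC).2
      have hnga : ¬ IsGreatest A g := fun h => absurd (h.2 haA) hga.not_ge
      have hngb : ¬ IsGreatest B g := fun h => absurd (h.2 hbB) hgb.not_ge
      have h1 : IsLeast {z ∈ A | g < z} (f g) := hA.2.2.1 g (hCA hgC) hnga
      have h2 : IsLeast {z ∈ B | g < z} (f g) := hB.2.2.1 g (hCB hgC) hngb
      have e1 : a = f g := by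
        refine le_antisymm ?_ (h1.2 ⟨haA, hga⟩)
        have hfA : f g ∈ A := h1.1.1
        rcases hA.1.1 a haA (f g) hfA with h | h
        · exact h
        · rcases eq_or_lt_of_le h with h' | h'
          · exact h'.symm.le
          · have : f g ∈ C := hCa ▸ (⟨hfA, h'⟩ : f g ∈ IS A a)
            exact absurd (hgub this) h1.1.2.not_ge
      have e2 : b = f g := by
        refine le_antisymm ?_ (h2.2 ⟨hbB, hgb⟩)
        have hfB : f g ∈ B := h2.1.1
        rcases hB.1.1 b hbB (f g) hfB with h | h
        · exact h
        · rcases eq_or_lt_of_le h with h' | h'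
          · exact h'.symm.le
          · have : f g ∈ C := hCb ▸ (⟨hfB, h'⟩ : f g ∈ IS B b)
            exact absurd (hgub this) h2.1.2.not_ge
      rw [e1, e2]
    · have hlimA : IsLimitElem A a := by
        refine ⟨haA, ?_, ?_⟩
        · intro hla
          have h1 : x₀ < a := by
            rcases eq_or_lt_of_le (hA.2.1.2 haA) with rfl | h
            · exact absurd hx₀C haC
            · exact h
          exact absurd (hla.2 hA.2.1.1) h1.not_ge
        · rintro ⟨z, hzA, hzl⟩
          have hza : z < a := hzl.1.2
          have hzC : z ∈ C := hCa ▸ (⟨hzA, hza⟩ : z ∈ IS A a)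
          obtain ⟨c, hcC, hcz⟩ : ∃ c ∈ C, ¬ c ≤ z := by
            by_contra hcon
            push_neg at hcon
            exact hg ⟨z, hzC, hcon⟩
          have hzc : z < c := by
            rcases hA.1.1 z hzA c (hCA hcC) with h | h
            · exact lt_of_le_of_ne h (fun e => hcz (e ▸ le_refl z))
            · exact absurd h hcz
          have hca : c < a := (hCa ▸ hcC).2
          exact absurd (hzl.2 ⟨hCA hcC, hzc⟩) hca.not_ge
      have hlimB : IsLimitElem B b := by
        refine ⟨hbB, ?_, ?_⟩
        · intro hlb
          have h1 : x₀ < b := by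
            rcases eq_or_lt_of_le (hB.2.1.2 hbB) with rfl | h
            · exact absurd hx₀C hbC
            · exact h
          exact absurd (hlb.2 hB.2.1.1) h1.not_ge
        · rintro ⟨z, hzB, hzl⟩
          have hzb : z < b := hzl.1.2
          have hzC : z ∈ C := hCb ▸ (⟨hzB, hzb⟩ : z ∈ IS B b)
          obtain ⟨c, hcC, hcz⟩ : ∃ c ∈ C, ¬ c ≤ z := by
            by_contra hcon
            push_neg at hcon
            exact hg ⟨z, hzC, hcon⟩
          have hzc : z < c := by
            rcases hB.1.1 z hzB c (hCB hcC) with h | h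
            · exact lt_of_le_of_ne h (fun e => hcz (e ▸ le_refl z))
            · exact absurd h hcz
          have hcb : c < b := (hCb ▸ hcC).2
          exact absurd (hzl.2 ⟨hCB hcC, hzc⟩) hcb.not_ge
      have l1 : IsLUB C a := hCa ▸ hA.2.2.2 a hlimA
      have l2 : IsLUB C b := hCb ▸ hB.2.2.2 b hlimB
      exact l1.unique l2
  apply haC
  refine ⟨haA, key ▸ hbB, ?_⟩
  ext z
  constructor
  · rintro ⟨hzA, hz⟩
    rcases eq_or_lt_of_le hz with rfl | h
    · exact ⟨key ▸ hbB, hz⟩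
    · exact ⟨hCB (hCa ▸ (⟨hzA, h⟩ : z ∈ IS A a)), hz⟩
  · rintro ⟨hzB, hz⟩
    rcases eq_or_lt_of_le hz with rfl | h
    · exact ⟨haA, hz⟩
    · have : z < b := key ▸ h
      exact ⟨hCA (hCb ▸ (⟨hzB, this⟩ : z ∈ IS B b)), hz⟩


lemma singleton_tower (f : X → X) (x₀ : X) : BourbakiTower f x₀ ({x₀} : Set X) := by
  refine ⟨⟨?_, ?_⟩, ⟨rfl, fun z hz => hz ▸ le_refl _⟩, ?_, ?_⟩
  · rintro a rfl b rfl; exact Or.inl le_rfl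
  · intro S hS ⟨s, hs⟩
    have : s = x₀ := hS hs
    subst this
    exact ⟨s, hs, fun z hz => (hS hz : z = s) ▸ le_refl _⟩
  · intro y hy hng
    exact absurd ⟨hy, fun z hz => hz ▸ (hy ▸ le_refl _)⟩ hng
  · rintro y ⟨hy, hnl, -⟩
    exact absurd ⟨hy, fun z hz => hz ▸ (hy ▸ le_refl _)⟩ hnl

lemma union_tower (f : X → X) (x₀ : X) :
    BourbakiTower f x₀ (⋃₀ {Y : Set X | BourbakiTower f x₀ Y}) := by
  classical
  set Ω := ⋃₀ {Y : Set X | BourbakiTower f x₀ Y} with hΩdef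
  have hmem : ∀ x, x ∈ Ω ↔ ∃ A, BourbakiTower f x₀ A ∧ x ∈ A := by
    intro x; simp [hΩdef, Set.mem_sUnion]
  have hsub : ∀ A, BourbakiTower f x₀ A → A ⊆ Ω := by
    intro A hA x hx; exact (hmem x).mpr ⟨A, hA, hx⟩
  -- common tower for two points
  have hcommon : ∀ x ∈ Ω, ∀ y ∈ Ω, ∃ D, BourbakiTower f x₀ D ∧ x ∈ D ∧ y ∈ D := by
    intro x hx y hy
    obtain ⟨A, hA, hxA⟩ := (hmem x).mp hx
    obtain ⟨B, hB, hyB⟩ := (hmem y).mp hy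
    rcases tower_comparison hA hB with h | h
    · exact ⟨B, hB, h.1 hxA, hyB⟩
    · exact ⟨A, hA, hxA, h.1 hyB⟩
  -- downward closedness of each tower within Ω
  have hdc : ∀ A, BourbakiTower f x₀ A → ∀ a ∈ A, ∀ z ∈ Ω, z < a → z ∈ A := by
    intro A hA a haA z hz hlt
    obtain ⟨B, hB, hzB⟩ := (hmem z).mp hz
    rcases tower_comparison hA hB with h | h
    · exact h.2 a haA z hzB hlt
    · exact h.1 hzB
  have htot : ∀ a ∈ Ω, ∀ b ∈ Ω, a ≤ b ∨ b ≤ a := by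
    intro a ha b hb
    obtain ⟨D, hD, haD, hbD⟩ := hcommon a ha b hb
    exact hD.1.1 a haD b hbD
  refine ⟨⟨htot, ?_⟩, ?_, ?_, ?_⟩
  · -- least elements of subsets
    intro S hS ⟨s, hs⟩
    obtain ⟨A, hA, hsA⟩ := (hmem s).mp (hS hs)
    have hS'A : {t ∈ S | t ≤ s} ⊆ A := by
      rintro t ⟨htS, hts⟩
      rcases eq_or_lt_of_le hts with rfl | h
      · exact hsA
      · exact hdc A hA s hsA t (hS htS) h
    obtain ⟨m, hm⟩ := hA.1.2 _ hS'A ⟨s, hs, le_rfl⟩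
    refine ⟨m, hm.1.1, ?_⟩
    intro t ht
    rcases htot t (hS ht) s (hS hs) with h | h
    · exact hm.2 ⟨ht, h⟩
    · exact le_trans (hm.1.2) h
  · -- least element x₀
    refine ⟨hsub _ (singleton_tower f x₀) rfl, ?_⟩
    intro z hz
    obtain ⟨A, hA, hzA⟩ := (hmem z).mp hz
    exact hA.2.1.2 hzA
  · -- successors
    intro y hy hng
    obtain ⟨w, hwΩ, hwy⟩ : ∃ w ∈ Ω, ¬ w ≤ y := by
      by_contra hcon
      push_neg at hcon
      exact hng ⟨hy, hcon⟩
    obtain ⟨D, hD, hyD, hwD⟩ := hcommon y hy w hwΩ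
    have hngD : ¬ IsGreatest D y := fun h => hwy (h.2 hwD)
    have hfy := hD.2.2.1 y hyD hngD
    refine ⟨⟨hsub _ hD hfy.1.1, hfy.1.2⟩, ?_⟩
    rintro z ⟨hzΩ, hyz⟩
    obtain ⟨E, hE, hyE, hzE⟩ := hcommon y hy z hzΩ
    have hngE : ¬ IsGreatest E y := fun h => absurd (h.2 hzE) hyz.not_ge
    exact (hE.2.2.1 y hyE hngE).2 ⟨hzE, hyz⟩
  · -- limits
    rintro y ⟨hy, hnl, hns⟩
    obtain ⟨A, hA, hyA⟩ := (hmem y).mp hy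
    have hIS : IS Ω y = IS A y := by
      ext z
      constructor
      · rintro ⟨hzΩ, hzy⟩
        exact ⟨hdc A hA y hyA z hzΩ hzy, hzy⟩
      · rintro ⟨hzA, hzy⟩
        exact ⟨hsub _ hA hzA, hzy⟩
    have hlimA : IsLimitElem A y := by
      refine ⟨hyA, ?_, ?_⟩
      · intro hlA
        have : y = x₀ := le_antisymm (hlA.2 hA.2.1.1) (hA.2.1.2 hyA)
        apply hnl
        refine ⟨hy, ?_⟩
        intro z hz
        obtain ⟨B, hB, hzB⟩ := (hmem z).mp hz
        exact this ▸ hB.2.1.2 hzB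
      · rintro ⟨z, hzA, hl⟩
        apply hns
        refine ⟨z, hsub _ hA hzA, ⟨hy, hl.1.2⟩, ?_⟩
        rintro w ⟨hwΩ, hzw⟩
        obtain ⟨E, hE, hwE⟩ := (hmem w).mp hwΩ
        rcases tower_comparison hA hE with h | h
        · -- A is initial segment of E
          rcases htot w hwΩ y hy with hwy | hyw
          · rcases eq_or_lt_of_le hwy with rfl | h'
            · exact le_rfl
            · have : w ∈ A := h.2 y hyA w hwE h'
              exact hl.2 ⟨this, hzw⟩
          · exact hyw
        · exact hl.2 ⟨h.1 hwE, hzw⟩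
    rw [hIS]
    exact hA.2.2.2 y hlimA

end
theorem stmt2 {X : Type*} [PartialOrder X] [Nonempty X]
    (hlub : ∀ W : Set X, W.Nonempty → IsWOSubset W → ∃ u, IsLUB W u)
    (f : X → X) (hf : Progressive f) (x₀ : X) (ω : X)
    (hω : IsLUB (⋃₀ {Y : Set X | BourbakiTower f x₀ Y}) ω) :
    ω ∈ ⋃₀ {Y : Set X | BourbakiTower f x₀ Y} ∧ f ω = ω := by
  classical
  set Ω := ⋃₀ {Y : Set X | BourbakiTower f x₀ Y} with hΩdef
  have hΩ : BourbakiTower f x₀ Ω := union_tower f x₀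
  have hub : ∀ z ∈ Ω, z ≤ ω := fun z hz => hω.1 hz
  -- Step 1: ω ∈ Ω, via the tower Ω ∪ {ω}
  have hωΩ : ω ∈ Ω := by
    have hT : BourbakiTower f x₀ (Ω ∪ {ω}) := by
      have hTub : ∀ z ∈ Ω ∪ {ω}, z ≤ ω := by
        rintro z (hz | rfl)
        · exact hub z hz
        · exact le_rfl
      refine ⟨⟨?_, ?_⟩, ?_, ?_, ?_⟩
      · rintro a (ha | rfl) b (hb | rfl)
        · exact hΩ.1.1 a ha b hb
        · exact Or.inl (hub a ha)
        · exact Or.inr (hub b hb)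
        · exact Or.inl le_rfl
      · intro S hS ⟨s, hs⟩
        by_cases hSΩ : (S ∩ Ω).Nonempty
        · obtain ⟨m, hm⟩ := hΩ.1.2 (S ∩ Ω) (fun x hx => hx.2) hSΩ
          refine ⟨m, hm.1.1, ?_⟩
          intro t ht
          rcases hS ht with htΩ | rfl
          · exact hm.2 ⟨ht, htΩ⟩
          · exact hub m hm.1.2
        · have hsw : s = ω := by
            rcases hS hs with h | h
            · exact absurd ⟨s, hs, h⟩ hSΩ
            · exact h
          refine ⟨ω, hsw ▸ hs, ?_⟩
          intro t ht
          rcases hS ht with h | h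
          · exact absurd ⟨t, ht, h⟩ hSΩ
          · exact h.ge
      · exact ⟨Or.inl hΩ.2.1.1, by
          rintro z (hz | rfl)
          · exact hΩ.2.1.2 hz
          · exact hub x₀ hΩ.2.1.1⟩
      · rintro y hy hng
        have hyΩ : y ∈ Ω := by
          rcases hy with h | rfl
          · exact h
          · exact absurd ⟨Or.inr rfl, hTub⟩ hng
        have hngΩ : ¬ IsGreatest Ω y := by
          intro h
          have : y = ω := le_antisymm (hub y hyΩ) (hω.2 h.2)
          exact hng ⟨hy, this ▸ hTub⟩
        have hfy := hΩ.2.2.1 y hyΩ hngΩ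
        refine ⟨⟨Or.inl hfy.1.1, hfy.1.2⟩, ?_⟩
        rintro z ⟨hzT, hyz⟩
        rcases hzT with hz | rfl
        · exact hfy.2 ⟨hz, hyz⟩
        · exact hub _ hfy.1.1
      · rintro y ⟨hyT, hnl, hns⟩
        by_cases hyΩ : y ∈ Ω
        · have hIS : IS (Ω ∪ {ω}) y = IS Ω y := by
            ext z
            constructor
            · rintro ⟨(hz | rfl), hzy⟩
              · exact ⟨hz, hzy⟩
              · exact absurd (hub y hyΩ) hzy.not_ge
            · rintro ⟨hz, hzy⟩
              exact ⟨Or.inl hz, hzy⟩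
          have hlim : IsLimitElem Ω y := by
            refine ⟨hyΩ, ?_, ?_⟩
            · intro h
              refine hnl ⟨hyT, ?_⟩
              rintro z (hz | rfl)
              · exact h.2 hz
              · exact hub y hyΩ
            · rintro ⟨z, hz, hl⟩
              refine hns ⟨z, Or.inl hz, ⟨hyT, hl.1.2⟩, ?_⟩
              rintro w ⟨(hw | rfl), hzw⟩
              · exact hl.2 ⟨hw, hzw⟩
              · exact hub y hyΩ
          rw [hIS]
          exact hΩ.2.2.2 y hlim
        · have hyω : y = ω := by
            rcases hyT with h | h
            · exact absurd h hyΩ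
            · exact h
          have hωΩ' : ω ∉ Ω := hyω ▸ hyΩ
          have hIS : IS (Ω ∪ {ω}) y = Ω := by
            ext z
            constructor
            · rintro ⟨(hz | rfl), hzy⟩
              · exact hz
              · rw [hyω] at hzy
                exact absurd hzy (lt_irrefl _)
            · intro hz
              refine ⟨Or.inl hz, ?_⟩
              rw [hyω]
              exact lt_of_le_of_ne (hub z hz) (fun e => hωΩ' (e ▸ hz))
          rw [hIS, hyω]
          exact hω
    have : Ω ∪ {ω} ⊆ Ω := Set.subset_sUnion_of_mem hT
    exact this (Or.inr rfl)
  refine ⟨hωΩ, ?_⟩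
  -- Step 2: f ω = ω, via the tower Ω ∪ {f ω}
  by_cases hfωΩ : f ω ∈ Ω
  · exact le_antisymm (hub _ hfωΩ) (hf ω)
  exfalso
  have hlt : ω < f ω := lt_of_le_of_ne (hf ω) (fun e => hfωΩ (e ▸ hωΩ))
  have hTub : ∀ z ∈ Ω ∪ {f ω}, z ≤ f ω := by
    rintro z (hz | rfl)
    · exact (hub z hz).trans (hf ω)
    · exact le_rfl
  have hsuccfω : IsLeast {z ∈ Ω ∪ {f ω} | ω < z} (f ω) := by
    refine ⟨⟨Or.inr rfl, hlt⟩, ?_⟩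
    rintro z ⟨(hz | rfl), hωz⟩
    · exact absurd (hub z hz) hωz.not_ge
    · exact le_rfl
  have hT : BourbakiTower f x₀ (Ω ∪ {f ω}) := by
    refine ⟨⟨?_, ?_⟩, ?_, ?_, ?_⟩
    · rintro a (ha | rfl) b (hb | rfl)
      · exact hΩ.1.1 a ha b hb
      · exact Or.inl (hTub a (Or.inl ha))
      · exact Or.inr (hTub b (Or.inl hb))
      · exact Or.inl le_rfl
    · intro S hS ⟨s, hs⟩
      by_cases hSΩ : (S ∩ Ω).Nonempty
      · obtain ⟨m, hm⟩ := hΩ.1.2 (S ∩ Ω) (fun x hx => hx.2) hSΩ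
        refine ⟨m, hm.1.1, ?_⟩
        intro t ht
        rcases hS ht with htΩ | rfl
        · exact hm.2 ⟨ht, htΩ⟩
        · exact hTub m (Or.inl hm.1.2)
      · have hsw : s = f ω := by
          rcases hS hs with h | h
          · exact absurd ⟨s, hs, h⟩ hSΩ
          · exact h
        refine ⟨f ω, hsw ▸ hs, ?_⟩
        intro t ht
        rcases hS ht with h | h
        · exact absurd ⟨t, ht, h⟩ hSΩ
        · exact h.ge
    · exact ⟨Or.inl hΩ.2.1.1, by
        rintro z (hz | rfl)
        · exact hΩ.2.1.2 hz
        · exact hTub x₀ (Or.inl hΩ.2.1.1)⟩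
    · rintro y hy hng
      have hyΩ : y ∈ Ω := by
        rcases hy with h | rfl
        · exact h
        · exact absurd ⟨Or.inr rfl, hTub⟩ hng
      by_cases hngΩ : IsGreatest Ω y
      · have hyω : y = ω := le_antisymm (hub y hyΩ) (hngΩ.2 hωΩ)
        subst hyω
        -- need: IsLeast {z ∈ Ω ∪ {f ω} | y < z} (f y)
        exact hsuccfω
      · have hfy := hΩ.2.2.1 y hyΩ hngΩ
        refine ⟨⟨Or.inl hfy.1.1, hfy.1.2⟩, ?_⟩
        rintro z ⟨hzT, hyz⟩
        rcases hzT with hz | rfl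
        · exact hfy.2 ⟨hz, hyz⟩
        · exact hTub _ (Or.inl hfy.1.1)
    · rintro y ⟨hyT, hnl, hns⟩
      have hyΩ : y ∈ Ω := by
        rcases hyT with h | h
        · exact h
        · exact absurd ⟨ω, Or.inl hωΩ, h ▸ hsuccfω⟩ hns
      have hIS : IS (Ω ∪ {f ω}) y = IS Ω y := by
        ext z
        constructor
        · rintro ⟨(hz | rfl), hzy⟩
          · exact ⟨hz, hzy⟩
          · exact absurd (hTub y (Or.inl hyΩ)) hzy.not_ge
        · rintro ⟨hz, hzy⟩
          exact ⟨Or.inl hz, hzy⟩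
      have hlim : IsLimitElem Ω y := by
        refine ⟨hyΩ, ?_, ?_⟩
        · intro h
          refine hnl ⟨hyT, ?_⟩
          rintro z (hz | rfl)
          · exact h.2 hz
          · exact hTub y (Or.inl hyΩ)
        · rintro ⟨z, hz, hl⟩
          refine hns ⟨z, Or.inl hz, ⟨hyT, hl.1.2⟩, ?_⟩
          rintro w ⟨(hw | rfl), hzw⟩
          · exact hl.2 ⟨hw, hzw⟩
          · exact hTub y (Or.inl hyΩ)
      rw [hIS]
      exact hΩ.2.2.2 y hlim
  exact hfωΩ (Set.subset_sUnion_of_mem hT (Or.inr rfl))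
end

section
/- Let (X, ≤) be a partially ordered set, let f : X → X be progressive, let x₀ ∈ X, and let Ω be the union of all Bourbaki f-towers based at x₀. If y is a limit element of Ω, then y = lub_X(IS_Ω(y)). -/
section Aux

variable {X : Type*} [PartialOrder X]

/-- The common part of two towers: points in both with equal weak initial segments. -/
def Ecom (A B : Set X) : Set X := {x | x ∈ A ∧ x ∈ B ∧ WIS A x = WIS B x}

lemma Ecom_symm (A B : Set X) : Ecom A B = Ecom B A := by
  ext x
  constructor <;> rintro ⟨h1, h2, h3⟩ <;> exact ⟨h2, h1, h3.symm⟩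

lemma Ecom_dc {A B : Set X} {x x' : X} (hx : x ∈ Ecom A B) (hx' : x' ∈ A) (hle : x' ≤ x) :
    x' ∈ Ecom A B := by
  obtain ⟨hxA, hxB, hW⟩ := hx
  have hx'B : x' ∈ B := by
    have h : x' ∈ WIS A x := ⟨hx', hle⟩
    rw [hW] at h; exact h.1
  refine ⟨hx', hx'B, ?_⟩
  ext z
  constructor
  · rintro ⟨hzA, hz⟩
    have h : z ∈ WIS A x := ⟨hzA, hz.trans hle⟩
    rw [hW] at h
    exact ⟨h.1, hz⟩
  · rintro ⟨hzB, hz⟩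
    have h : z ∈ WIS B x := ⟨hzB, hz.trans hle⟩
    rw [← hW] at h
    exact ⟨h.1, hz⟩

lemma IS_least_bad {A B : Set X} {a : X} (htot : ∀ p ∈ A, ∀ q ∈ A, p ≤ q ∨ q ≤ p)
    (ha : IsLeast (A \ Ecom A B) a) : IS A a = Ecom A B := by
  ext z
  constructor
  · rintro ⟨hzA, hz⟩
    by_contra hzE
    exact absurd (ha.2 ⟨hzA, hzE⟩) (hz.not_ge)
  · intro hz
    refine ⟨hz.1, ?_⟩
    rcases htot z hz.1 a ha.1.1 with h | h
    · rcases h.lt_or_eq with h' | h'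
      · exact h'
      · exact absurd (h' ▸ hz) ha.1.2
    · exact absurd (Ecom_dc hz ha.1.1 h) ha.1.2

lemma WIS_least_bad {A B : Set X} {a : X} (htot : ∀ p ∈ A, ∀ q ∈ A, p ≤ q ∨ q ≤ p)
    (ha : IsLeast (A \ Ecom A B) a) : WIS A a = Ecom A B ∪ {a} := by
  have hIS := IS_least_bad htot ha
  ext z
  constructor
  · rintro ⟨hzA, hz⟩
    rcases hz.lt_or_eq with h | h
    · exact Or.inl (hIS ▸ (⟨hzA, h⟩ : z ∈ IS A a))
    · exact Or.inr h
  · rintro (hz | hz)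
    · rw [← hIS] at hz
      exact ⟨hz.1, hz.2.le⟩
    · rw [hz]; exact ⟨ha.1.1, le_refl a⟩

lemma key_cases {f : X → X} {x₀ : X} {A B : Set X} (hA : BourbakiTower f x₀ A)
    (hB : BourbakiTower f x₀ B) {a : X} (ha : IsLeast (A \ Ecom A B) a) :
    (¬ (Ecom A B).Nonempty → a = x₀) ∧
    (∀ m, IsGreatest (Ecom A B) m → a = f m) ∧
    ((Ecom A B).Nonempty → (¬ ∃ m, IsGreatest (Ecom A B) m) → IsLUB (Ecom A B) a) := by
  have htot := hA.1.1
  have hIS := IS_least_bad htot ha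
  refine ⟨?_, ?_, ?_⟩
  · intro hne
    have hEe : Ecom A B = ∅ := Set.not_nonempty_iff_eq_empty.mp hne
    have hl : IsLeast A a :=
      ⟨ha.1.1, fun z hz => ha.2 ⟨hz, by rw [hEe]; exact Set.notMem_empty z⟩⟩
    exact le_antisymm (hl.2 hA.2.1.1) (hA.2.1.2 hl.1)
  · intro m hm
    have hmA : m ∈ A := hm.1.1
    have hmlt : m < a := by
      have h : m ∈ IS A a := by rw [hIS]; exact hm.1
      exact h.2
    have hla : IsLeast {z ∈ A | m < z} a := by
      refine ⟨⟨ha.1.1, hmlt⟩, ?_⟩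
      rintro z ⟨hzA, hz⟩
      exact ha.2 ⟨hzA, fun hzE => absurd (hm.2 hzE) (hz.not_ge)⟩
    have hng : ¬ IsGreatest A m := fun hg => absurd (hg.2 ha.1.1) (hmlt.not_ge)
    exact hla.unique (hA.2.2.1 m hmA hng)
  · intro hne hng
    have haA := ha.1.1
    have hnl : ¬ IsLeast A a := by
      intro hl
      have hax : a = x₀ := le_antisymm (hl.2 hA.2.1.1) (hA.2.1.2 haA)
      obtain ⟨e, he⟩ := hne
      have hx0 : x₀ ∈ Ecom A B := Ecom_dc he hA.2.1.1 (hA.2.1.2 he.1)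
      exact ha.1.2 (hax ▸ hx0)
    have hns : ¬ IsSuccElem A a := by
      rintro ⟨z, hzA, hzl⟩
      have hza : z < a := hzl.1.2
      have hzE : z ∈ Ecom A B := by rw [← hIS]; exact ⟨hzA, hza⟩
      have hex : ∃ e ∈ Ecom A B, ¬ e ≤ z := by
        by_contra hc
        push_neg at hc
        exact hng ⟨z, hzE, hc⟩
      obtain ⟨e, heE, hez⟩ := hex
      have heA : e ∈ A := heE.1
      have hzlt : z < e := by
        rcases htot z hzA e heA with h | h
        · exact lt_of_le_of_ne h (fun h' => hez h'.ge)
        · exact absurd h hez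
      have hae : a ≤ e := hzl.2 ⟨heA, hzlt⟩
      have hea : e < a := by
        have h : e ∈ IS A a := by rw [hIS]; exact heE
        exact h.2
      exact absurd hae (hea.not_ge)
    have h := hA.2.2.2 a ⟨haA, hnl, hns⟩
    rwa [hIS] at h


lemma tower_comp {f : X → X} {x₀ : X} {A B : Set X} (hA : BourbakiTower f x₀ A)
    (hB : BourbakiTower f x₀ B) : IsInitialSegOf A B ∨ IsInitialSegOf B A := by
  by_cases hAE : A ⊆ Ecom A B
  · left
    refine ⟨fun x hx => (hAE hx).2.1, ?_⟩
    intro p hp q hq hlt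
    have h : q ∈ WIS B p := ⟨hq, hlt.le⟩
    rw [← (hAE hp).2.2] at h
    exact h.1
  by_cases hBE : B ⊆ Ecom A B
  · right
    refine ⟨fun x hx => (hBE hx).1, ?_⟩
    intro p hp q hq hlt
    have h : q ∈ WIS A p := ⟨hq, hlt.le⟩
    rw [(hBE hp).2.2] at h
    exact h.1
  exfalso
  obtain ⟨xa, hxaA, hxaE⟩ := Set.not_subset.mp hAE
  obtain ⟨xb, hxbB, hxbE⟩ := Set.not_subset.mp hBE
  obtain ⟨a, ha⟩ := hA.1.2 (A \ Ecom A B) Set.diff_subset ⟨xa, hxaA, hxaE⟩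
  obtain ⟨b, hb⟩ := hB.1.2 (B \ Ecom B A) Set.diff_subset
    ⟨xb, hxbB, by rw [← Ecom_symm]; exact hxbE⟩
  have kA := key_cases hA hB ha
  have kB := key_cases hB hA hb
  have hES : Ecom B A = Ecom A B := Ecom_symm B A
  have hab : a = b := by
    by_cases hne : (Ecom A B).Nonempty
    · by_cases hg : ∃ m, IsGreatest (Ecom A B) m
      · obtain ⟨m, hm⟩ := hg
        rw [kA.2.1 m hm, kB.2.1 m (by rw [hES]; exact hm)]
      · have h1 := kA.2.2 hne hg
        have h2 := kB.2.2 (by rw [hES]; exact hne) (by rw [hES]; exact hg)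
        rw [hES] at h2
        exact h1.unique h2
    · rw [kA.1 hne, kB.1 (by rw [hES]; exact hne)]
  have hW1 := WIS_least_bad hA.1.1 ha
  have hW2 := WIS_least_bad hB.1.1 hb
  have haE : a ∈ Ecom A B := by
    refine ⟨ha.1.1, hab ▸ hb.1.1, ?_⟩
    rw [hW1, hab, hW2, hES]
  exact ha.1.2 haE

end Aux

theorem stmt12 {X : Type*} [PartialOrder X] (f : X → X) (hf : Progressive f) (x₀ : X)
    (y : X) (hy : IsLimitElem (⋃₀ {Y : Set X | BourbakiTower f x₀ Y}) y) :
    IsLUB (IS (⋃₀ {Y : Set X | BourbakiTower f x₀ Y}) y) y := by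
  obtain ⟨hyΩ, hynl, hyns⟩ := hy
  obtain ⟨T, hT, hyT⟩ := hyΩ
  have hT : BourbakiTower f x₀ T := hT
  have hsub : ∀ S : Set X, BourbakiTower f x₀ S → ∀ z ∈ S, z < y → z ∈ T := by
    intro S hS z hzS hzy
    rcases tower_comp hS hT with h | h
    · exact h.1 hzS
    · exact h.2 y hyT z hzS hzy
  have hISeq : IS (⋃₀ {Y : Set X | BourbakiTower f x₀ Y}) y = IS T y := by
    ext z
    constructor
    · rintro ⟨⟨S, hS, hzS⟩, hzy⟩
      exact ⟨hsub S hS z hzS hzy, hzy⟩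
    · rintro ⟨hzT, hzy⟩
      exact ⟨⟨T, hT, hzT⟩, hzy⟩
  have hlim : IsLimitElem T y := by
    refine ⟨hyT, ?_, ?_⟩
    · intro hl
      apply hynl
      have hyx : y = x₀ := le_antisymm (hl.2 hT.2.1.1) (hT.2.1.2 hyT)
      refine ⟨⟨T, hT, hyT⟩, ?_⟩
      rintro w ⟨S, hS, hwS⟩
      rw [hyx]
      exact (hS : BourbakiTower f x₀ S).2.1.2 hwS
    · rintro ⟨z, hzT, hzl⟩
      apply hyns
      refine ⟨z, ⟨T, hT, hzT⟩, ⟨⟨T, hT, hyT⟩, hzl.1.2⟩, ?_⟩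
      rintro w ⟨⟨S, hS, hwS⟩, hzw⟩
      have hS : BourbakiTower f x₀ S := hS
      rcases tower_comp hS hT with h | h
      · exact hzl.2 ⟨h.1 hwS, hzw⟩
      · rcases hS.1.1 y (h.1 hyT) w hwS with hyw | hwy
        · exact hyw
        · rcases hwy.lt_or_eq with hlt | he
          · exact hzl.2 ⟨h.2 y hyT w hwS hlt, hzw⟩
          · exact he.ge
  have h := hT.2.2.2 y hlim
  rwa [hISeq]
end

section
/- Let (X, ≤) be a nonempty partially ordered set in which every nonempty well-ordered subset admits a least upper bound in X, let f : X → X be progressive, and let x₀ ∈ X. Then the union Ω of all Bourbaki f-towers based at x₀ has a largest element ω, and this largest element satisfies f(ω) = ω and x₀ ≤ ω. -/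
namespace BWaux

variable {X : Type*} [PartialOrder X] {f : X → X} {x₀ : X}

/-- The common part of two towers. -/
def Cset (A B : Set X) : Set X := {x | x ∈ A ∧ x ∈ B ∧ IS A x = IS B x}

lemma Cset_comm (A B : Set X) : Cset A B = Cset B A := by
  ext x; constructor <;> rintro ⟨h1, h2, h3⟩ <;> exact ⟨h2, h1, h3.symm⟩

lemma Cset_down {A B : Set X} {x y : X} (hx : x ∈ Cset A B) (hy : y ∈ A) (hyx : y < x) :
    y ∈ Cset A B := by
  obtain ⟨hxA, hxB, hIS⟩ := hx
  have hyB : y ∈ B := by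
    have : y ∈ IS A x := ⟨hy, hyx⟩
    rw [hIS] at this; exact this.1
  refine ⟨hy, hyB, ?_⟩
  ext z
  constructor
  · rintro ⟨hzA, hzy⟩
    have : z ∈ IS A x := ⟨hzA, hzy.trans hyx⟩
    rw [hIS] at this
    exact ⟨this.1, hzy⟩
  · rintro ⟨hzB, hzy⟩
    have : z ∈ IS B x := ⟨hzB, hzy.trans hyx⟩
    rw [← hIS] at this
    exact ⟨this.1, hzy⟩

lemma min_compl_IS {A B : Set X} (hA : BourbakiTower f x₀ A) {a : X}
    (ha : IsLeast (A \ Cset A B) a) : IS A a = Cset A B := by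
  ext z
  constructor
  · rintro ⟨hzA, hza⟩
    by_contra hz
    exact absurd (ha.2 ⟨hzA, hz⟩) hza.not_ge
  · intro hz
    have hzA : z ∈ A := hz.1
    refine ⟨hzA, ?_⟩
    rcases hA.1.1 a ha.1.1 z hzA with h | h
    · rcases eq_or_lt_of_le h with rfl | h'
      · exact absurd hz ha.1.2
      · exact absurd (Cset_down hz ha.1.1 h') ha.1.2
    · rcases eq_or_lt_of_le h with rfl | h'
      · exact absurd hz ha.1.2
      · exact h'

lemma x0_mem_Cset {A B : Set X} (hA : BourbakiTower f x₀ A) (hB : BourbakiTower f x₀ B) :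
    x₀ ∈ Cset A B := by
  refine ⟨hA.2.1.1, hB.2.1.1, ?_⟩
  ext z
  constructor
  · rintro ⟨hzA, hz⟩; exact absurd (hA.2.1.2 hzA) hz.not_ge
  · rintro ⟨hzB, hz⟩; exact absurd (hB.2.1.2 hzB) hz.not_ge

/-- Characterization of the minimum of `A \ C`. -/
lemma min_compl_cases {A B : Set X} (hA : BourbakiTower f x₀ A) (hB : BourbakiTower f x₀ B)
    {a : X} (ha : IsLeast (A \ Cset A B) a) :
    (Cset A B = ∅ → a = x₀) ∧
    (∀ m, IsGreatest (Cset A B) m → a = f m) ∧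
    ((∀ m, ¬ IsGreatest (Cset A B) m) → IsLUB (Cset A B) a) := by
  have hIS := min_compl_IS (B := B) hA ha
  refine ⟨?_, ?_, ?_⟩
  · intro hC
    by_contra hne
    have hx0 : x₀ < a := lt_of_le_of_ne (hA.2.1.2 ha.1.1) (Ne.symm hne)
    have : x₀ ∈ IS A a := ⟨hA.2.1.1, hx0⟩
    rw [hIS, hC] at this
    exact this
  · intro m hm
    have hmIS : m ∈ IS A a := by rw [hIS]; exact hm.1
    have hmng : ¬ IsGreatest A m := by
      rintro ⟨-, hub⟩
      exact absurd (hub ha.1.1) hmIS.2.not_ge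
    have hl := hA.2.2.1 m hmIS.1 hmng
    have hal : IsLeast {z ∈ A | m < z} a := by
      refine ⟨⟨ha.1.1, hmIS.2⟩, ?_⟩
      rintro z ⟨hzA, hmz⟩
      refine ha.2 ⟨hzA, fun hzC => ?_⟩
      exact absurd (hm.2 hzC) hmz.not_ge
    exact hal.unique hl
  · intro hng
    have hlim : IsLimitElem A a := by
      refine ⟨ha.1.1, ?_, ?_⟩
      · intro hla
        have : a = x₀ := hla.unique hA.2.1
        exact ha.1.2 (this ▸ x0_mem_Cset hA hB)
      · rintro ⟨z, hzA, hl⟩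
        have hza : z < a := hl.1.2
        have hzC : z ∈ Cset A B := by rw [← hIS]; exact ⟨hzA, hza⟩
        have : ¬ ∀ c ∈ Cset A B, c ≤ z := fun hub => hng z ⟨hzC, hub⟩
        push_neg at this
        obtain ⟨c, hcC, hcz⟩ := this
        have hcIS : c ∈ IS A a := by rw [hIS]; exact hcC
        have hzc : z < c := by
          rcases hA.1.1 z hzA c hcIS.1 with h | h
          · exact lt_of_le_of_ne h (fun h' => hcz (h' ▸ le_refl z))
          · exact absurd h hcz
        exact absurd (hl.2 ⟨hcIS.1, hzc⟩) hcIS.2.not_ge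
      
    have := hA.2.2.2 a hlim
    rwa [hIS] at this


lemma towers_comparable {A B : Set X} (hA : BourbakiTower f x₀ A) (hB : BourbakiTower f x₀ B) :
    IsInitialSegOf A B ∨ IsInitialSegOf B A := by
  set C := Cset A B with hCdef
  by_cases hAC : (A \ C).Nonempty
  · by_cases hBC : (B \ C).Nonempty
    · exfalso
      obtain ⟨a, ha⟩ := hA.1.2 (A \ C) Set.diff_subset hAC
      obtain ⟨b, hb⟩ := hB.1.2 (B \ Cset B A) (by rw [← Cset_comm]; exact Set.diff_subset)
        (by rwa [← Cset_comm])
      have hb' : IsLeast (B \ Cset B A) b := hb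
      have hcasesA := min_compl_cases hA hB ha
      have hcasesB := min_compl_cases hB hA hb'
      have hCC : Cset B A = C := Cset_comm B A
      have hab : a = b := by
        by_cases hCe : C = ∅
        · rw [hcasesA.1 hCe, hcasesB.1 (by rw [hCC]; exact hCe)]
        · by_cases hCg : ∃ m, IsGreatest C m
          · obtain ⟨m, hm⟩ := hCg
            rw [hcasesA.2.1 m hm, hcasesB.2.1 m (by rw [hCC]; exact hm)]
          · push_neg at hCg
            have h1 := hcasesA.2.2 hCg
            have h2 := hcasesB.2.2 (by rw [hCC]; exact hCg)
            rw [hCC] at h2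
            exact h1.unique h2
      have hISa := min_compl_IS (B := B) hA ha
      have hISb := min_compl_IS (B := A) hB hb'
      rw [hCC] at hISb
      refine ha.1.2 ⟨ha.1.1, ?_, ?_⟩
      · rw [hab]; exact hb.1.1
      · rw [hISa, hab, hISb]
    · right
      rw [Set.not_nonempty_iff_eq_empty, Set.diff_eq_empty] at hBC
      refine ⟨fun x hx => (hBC hx).1, ?_⟩
      intro b hbB c hcA hcb
      exact (Cset_down (hBC hbB) hcA hcb).2.1
  · left
    rw [Set.not_nonempty_iff_eq_empty, Set.diff_eq_empty] at hAC
    refine ⟨fun x hx => (hAC hx).2.1, ?_⟩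
    intro a haA c hcB hca
    have : c ∈ Cset B A := Cset_down (Cset_comm A B ▸ hAC haA) hcB hca
    exact this.2.1

/-- Any two points of the union of towers lie in a common tower. -/
lemma mem_common_tower {y z : X} {Y Z : Set X} (hY : BourbakiTower f x₀ Y)
    (hZ : BourbakiTower f x₀ Z) (hy : y ∈ Y) (hz : z ∈ Z) :
    ∃ T, BourbakiTower f x₀ T ∧ y ∈ T ∧ z ∈ T := by
  rcases towers_comparable hY hZ with h | h
  · exact ⟨Z, hZ, h.1 hy, hz⟩
  · exact ⟨Y, hY, hy, h.1 hz⟩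


lemma singleton_tower : BourbakiTower f x₀ ({x₀} : Set X) := by
  refine ⟨⟨?_, ?_⟩, ⟨rfl, fun y hy => by simp_all⟩, ?_, ?_⟩
  · rintro a rfl b rfl; exact Or.inl le_rfl
  · intro S hS ⟨s, hs⟩
    have : s = x₀ := hS hs
    subst this
    exact ⟨s, hs, fun t ht => le_of_eq (hS ht).symm⟩
  · intro y hy hng
    exact absurd ⟨hy, fun z hz => by simp_all⟩ hng
  · rintro y ⟨hy, hnl, -⟩
    exact absurd ⟨hy, fun z hz => by simp_all⟩ hnl

lemma union_tower :
    BourbakiTower f x₀ (⋃₀ {Y : Set X | BourbakiTower f x₀ Y}) := by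
  set Ω := ⋃₀ {Y : Set X | BourbakiTower f x₀ Y} with hΩ
  have hmem : ∀ x ∈ Ω, ∃ Y, BourbakiTower f x₀ Y ∧ x ∈ Y := by
    intro x hx; obtain ⟨Y, hY, hxY⟩ := hx; exact ⟨Y, hY, hxY⟩
  have htot : ∀ a ∈ Ω, ∀ b ∈ Ω, a ≤ b ∨ b ≤ a := by
    intro a ha b hb
    obtain ⟨Y, hY, haY⟩ := hmem a ha
    obtain ⟨Z, hZ, hbZ⟩ := hmem b hb
    obtain ⟨T, hT, haT, hbT⟩ := mem_common_tower hY hZ haY hbZ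
    exact hT.1.1 a haT b hbT
  have hwo : ∀ S : Set X, S ⊆ Ω → S.Nonempty → ∃ m, IsLeast S m := by
    intro S hS ⟨s, hs⟩
    obtain ⟨Y, hY, hsY⟩ := hmem s (hS hs)
    have hsub : {t ∈ S | t ≤ s} ⊆ Y := by
      rintro t ⟨htS, hts⟩
      obtain ⟨Z, hZ, htZ⟩ := hmem t (hS htS)
      rcases towers_comparable hZ hY with h | h
      · exact h.1 htZ
      · rcases eq_or_lt_of_le hts with rfl | h'
        · exact hsY
        · exact h.2 s hsY t htZ h'
    obtain ⟨m, hm⟩ := hY.1.2 _ hsub ⟨s, hs, le_rfl⟩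
    refine ⟨m, hm.1.1, ?_⟩
    intro t htS
    rcases htot t (hS htS) s (hS hs) with h | h
    · exact hm.2 ⟨htS, h⟩
    · exact (hm.2 ⟨hs, le_rfl⟩).trans h
  have hx0Ω : x₀ ∈ Ω := ⟨{x₀}, singleton_tower, rfl⟩
  have hleast : IsLeast Ω x₀ := by
    refine ⟨hx0Ω, fun y hy => ?_⟩
    obtain ⟨Y, hY, hyY⟩ := hmem y hy
    exact hY.2.1.2 hyY
  have hsucc : ∀ y ∈ Ω, ¬ IsGreatest Ω y → IsLeast {z ∈ Ω | y < z} (f y) := by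
    intro y hy hng
    obtain ⟨Y, hY, hyY⟩ := hmem y hy
    have key : ∀ w ∈ Ω, y < w → (f y ∈ Ω ∧ y < f y) ∧ f y ≤ w := by
      intro w hw hyw
      obtain ⟨Z, hZ, hwZ⟩ := hmem w hw
      obtain ⟨T, hT, hyT, hwT⟩ := mem_common_tower hY hZ hyY hwZ
      have hngT : ¬ IsGreatest T y := fun hg => hyw.not_ge (hg.2 hwT)
      have hl := hT.2.2.1 y hyT hngT
      exact ⟨⟨⟨T, hT, hl.1.1⟩, hl.1.2⟩, hl.2 ⟨hwT, hyw⟩⟩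
    have : ∃ w ∈ Ω, y < w := by
      by_contra h
      push_neg at h
      refine hng ⟨hy, fun w hw => ?_⟩
      rcases htot w hw y hy with h' | h'
      · exact h'
      · rcases eq_or_lt_of_le h' with rfl | h'' 
        · exact le_rfl
        · exact absurd h'' (h w hw)
    obtain ⟨w, hw, hyw⟩ := this
    refine ⟨⟨(key w hw hyw).1.1, (key w hw hyw).1.2⟩, ?_⟩
    rintro z ⟨hz, hyz⟩
    exact (key z hz hyz).2
  refine ⟨⟨htot, hwo⟩, hleast, hsucc, ?_⟩
  rintro y ⟨hy, hnl, hns⟩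
  obtain ⟨Y, hY, hyY⟩ := hmem y hy
  have hISeq : IS Ω y = IS Y y := by
    ext z
    constructor
    · rintro ⟨hz, hzy⟩
      obtain ⟨Z, hZ, hzZ⟩ := hmem z hz
      rcases towers_comparable hZ hY with h | h
      · exact ⟨h.1 hzZ, hzy⟩
      · exact ⟨h.2 y hyY z hzZ hzy, hzy⟩
    · rintro ⟨hz, hzy⟩
      exact ⟨⟨Y, hY, hz⟩, hzy⟩
  have hlimY : IsLimitElem Y y := by
    refine ⟨hyY, ?_, ?_⟩
    · intro hl
      exact hnl (hl.unique hY.2.1 ▸ hleast)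
    · rintro ⟨z, hzY, hl⟩
      have hzy : z < y := hl.1.2
      have hngY : ¬ IsGreatest Y z := fun hg => hzy.not_ge (hg.2 hyY)
      have : y = f z := hl.unique (hY.2.2.1 z hzY hngY)
      have hngΩ : ¬ IsGreatest Ω z := fun hg => hzy.not_ge (hg.2 ⟨Y, hY, hyY⟩)
      refine hns ⟨z, ⟨Y, hY, hzY⟩, ?_⟩
      rw [this]
      exact hsucc z ⟨Y, hY, hzY⟩ hngΩ
  have := hY.2.2.2 y hlimY
  rwa [← hISeq] at this


lemma tower_insert {T : Set X} {ω : X} (hT : BourbakiTower f x₀ T)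
    (hub : ∀ t ∈ T, t ≤ ω)
    (hsucc' : ω ∉ T → ∀ y ∈ T, IsGreatest T y → ω = f y)
    (hlim' : (∀ m, ¬ IsGreatest T m) → IsLUB T ω) :
    BourbakiTower f x₀ (insert ω T) := by
  by_cases hmem : ω ∈ T
  · rwa [Set.insert_eq_self.mpr hmem]
  have hltω : ∀ t ∈ T, t < ω := fun t ht =>
    lt_of_le_of_ne (hub t ht) (fun h => hmem (h ▸ ht))
  have htot : ∀ a ∈ insert ω T, ∀ b ∈ insert ω T, a ≤ b ∨ b ≤ a := by
    rintro a (rfl | ha) b (rfl | hb)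
    · exact Or.inl le_rfl
    · exact Or.inr (hub b hb)
    · exact Or.inl (hub a ha)
    · exact hT.1.1 a ha b hb
  have hgr : IsGreatest (insert ω T) ω :=
    ⟨Set.mem_insert _ _, by rintro a (rfl | ha); exacts [le_rfl, hub a ha]⟩
  refine ⟨⟨htot, ?_⟩, ?_, ?_, ?_⟩
  · intro S hS ⟨s, hs⟩
    by_cases hST : (S ∩ T).Nonempty
    · obtain ⟨m, hm⟩ := hT.1.2 (S ∩ T) Set.inter_subset_right hST
      refine ⟨m, hm.1.1, fun t ht => ?_⟩
      rcases hS ht with rfl | htT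
      · exact hub m hm.1.2
      · exact hm.2 ⟨ht, htT⟩
    · have hsω : s = ω := by
        rcases hS hs with rfl | hsT
        · rfl
        · exact absurd ⟨s, hs, hsT⟩ hST
      subst hsω
      refine ⟨s, hs, fun t ht => ?_⟩
      rcases hS ht with rfl | htT
      · exact le_rfl
      · exact absurd ⟨t, ht, htT⟩ hST
  · exact ⟨Set.mem_insert_of_mem _ hT.2.1.1,
      by rintro a (rfl | ha); exacts [hub x₀ hT.2.1.1, hT.2.1.2 ha]⟩
  · rintro y (rfl | hyT) hng
    · exact absurd hgr hng
    by_cases hgT : IsGreatest T y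
    · have hωfy := hsucc' hmem y hyT hgT
      refine ⟨⟨hωfy ▸ Set.mem_insert _ _, hωfy ▸ hltω y hyT⟩, ?_⟩
      rintro z ⟨(rfl | hzT), hyz⟩
      · exact le_of_eq hωfy.symm
      · exact absurd (hgT.2 hzT) hyz.not_ge
    · have hl := hT.2.2.1 y hyT hgT
      refine ⟨⟨Set.mem_insert_of_mem _ hl.1.1, hl.1.2⟩, ?_⟩
      rintro z ⟨(rfl | hzT), hyz⟩
      · exact hub _ hl.1.1
      · exact hl.2 ⟨hzT, hyz⟩
  · rintro y ⟨hy, hnl, hns⟩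
    rcases hy with rfl | hyT
    · -- y = ω, a limit element: show IS (insert ω T) ω = T and T has no greatest
      have hISeq : IS (insert y T) y = T := by
        ext z
        constructor
        · rintro ⟨(rfl | hzT), hzy⟩
          · exact absurd hzy (lt_irrefl _)
          · exact hzT
        · intro hzT
          exact ⟨Set.mem_insert_of_mem _ hzT, hltω z hzT⟩
      rw [hISeq]
      refine hlim' ?_
      intro m hm
      refine hns ⟨m, Set.mem_insert_of_mem _ hm.1, ?_⟩
      refine ⟨⟨Set.mem_insert _ _, ?_⟩, ?_⟩
      · exact hltω m hm.1
      · rintro w ⟨(rfl | hwT), hmw⟩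
        · exact le_rfl
        · exact absurd (hm.2 hwT) hmw.not_ge
    · have hlimT : IsLimitElem T y := by
        refine ⟨hyT, ?_, ?_⟩
        · intro hl
          refine hnl ⟨Set.mem_insert_of_mem _ hl.1, ?_⟩
          rintro a (rfl | haT)
          · exact hub y hyT
          · exact hl.2 haT
        · rintro ⟨z, hzT, hl⟩
          refine hns ⟨z, Set.mem_insert_of_mem _ hzT, ⟨⟨Set.mem_insert_of_mem _ hl.1.1, hl.1.2⟩, ?_⟩⟩
          rintro w ⟨(rfl | hwT), hzw⟩
          · exact hub y hyT
          · exact hl.2 ⟨hwT, hzw⟩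
      have := hT.2.2.2 y hlimT
      have hISeq : IS (insert ω T) y = IS T y := by
        ext z
        constructor
        · rintro ⟨(rfl | hzT), hzy⟩
          · exact absurd hzy (hltω y hyT).asymm
          · exact ⟨hzT, hzy⟩
        · rintro ⟨hzT, hzy⟩
          exact ⟨Set.mem_insert_of_mem _ hzT, hzy⟩
      rwa [hISeq]

end BWaux

theorem stmt18 {X : Type*} [PartialOrder X] [Nonempty X]
    (hlub : ∀ W : Set X, W.Nonempty → IsWOSubset W → ∃ u, IsLUB W u)
    (f : X → X) (hf : Progressive f) (x₀ : X) :
    ∃ ω : X, IsGreatest (⋃₀ {Y : Set X | BourbakiTower f x₀ Y}) ω ∧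
      f ω = ω ∧ x₀ ≤ ω := by


  classical
  set Ω := ⋃₀ {Y : Set X | BourbakiTower f x₀ Y} with hΩdef
  have hΩt : BourbakiTower f x₀ Ω := BWaux.union_tower
  have hΩne : Ω.Nonempty := ⟨x₀, hΩt.2.1.1⟩
  obtain ⟨ω, hω⟩ := hlub Ω hΩne hΩt.1
  have hins : BourbakiTower f x₀ (insert ω Ω) := by
    refine BWaux.tower_insert hΩt (fun t ht => hω.1 ht) ?_ (fun _ => hω)
    intro hωΩ y hyΩ hg
    have : ω = y := ((hω.2 hg.2).antisymm (hω.1 hg.1))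
    exact absurd (this ▸ hg.1) hωΩ
  have hωΩ : ω ∈ Ω := Set.subset_sUnion_of_mem hins (Set.mem_insert _ _)
  have hgr : IsGreatest Ω ω := ⟨hωΩ, hω.1⟩
  have hins2 : BourbakiTower f x₀ (insert (f ω) Ω) := by
    refine BWaux.tower_insert hΩt (fun t ht => (hgr.2 ht).trans (hf ω)) ?_ ?_
    · intro _ y hyΩ hg
      rw [hg.unique hgr]
    · intro h
      exact absurd hgr (h ω)
  have hfΩ : f ω ∈ Ω := Set.subset_sUnion_of_mem hins2 (Set.mem_insert _ _)
  exact ⟨ω, hgr, le_antisymm (hgr.2 hfΩ) (hf ω), hgr.2 hΩt.2.1.1⟩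
end
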